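/- In the purely fermionic case: ℋ^f_k = 0 for every integer k > n, and dim ℋ^f_k = C(2n, k) − C(2n, k−2) for every 0 ≤ k ≤ n (with C(2n, j) = 0 for j < 0). -/

import Mathlib

set_option synthInstance.maxHeartbeats 1000000
set_option maxHeartbeats 1000000

noncomputable section

/-- The Grassmann algebra Λ_{2n} on `2n` anticommuting generators. -/
abbrev Grass (n : ℕ) := ExteriorAlgebra ℝ (Fin (2*n) → ℝ)

/-- The fermionic generator x`_i. -/
def fgen (n : ℕ) (i : Fin (2*n)) : Grass n :=
  ExteriorAlgebra.ι ℝ (Pi.single i (1:ℝ))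

/-- The fermionic partial derivative ∂_{x`_i}, the odd derivation with
∂_{x`_i}(x`_j) = δ_{ij}: contraction with the i-th dual basis vector. -/
def fpderiv (n : ℕ) (i : Fin (2*n)) : Grass n →ₗ[ℝ] Grass n :=
  CliffordAlgebra.contractLeft (LinearMap.proj i)

/-- The fermionic Laplace operator Δ_f = 4∑_j ∂_{x`_{2j−1}}∂_{x`_{2j}}. -/
def lapF (n : ℕ) : Grass n →ₗ[ℝ] Grass n :=
  (4:ℝ) • ∑ j : Fin n,
    (fpderiv n ⟨2*j.1, by omega⟩) ∘ₗ (fpderiv n ⟨2*j.1+1, by omega⟩)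

/-- x`² = ∑_{j=1}^n x`_{2j−1} x`_{2j}. -/
def rf2 (n : ℕ) : Grass n := ∑ j : Fin n, fgen n ⟨2*j.1, by omega⟩ * fgen n ⟨2*j.1+1, by omega⟩

/-- The degree-`k` homogeneous part 𝒫^f_k of the Grassmann algebra. -/
def Pf (n : ℕ) (k : ℕ) : Submodule ℝ (Grass n) :=
  (LinearMap.range (ExteriorAlgebra.ι ℝ (M := Fin (2*n) → ℝ)))^k

/-- The space ℋ^f_k of fermionic (symplectic) harmonics of degree k. -/
def Hf (n : ℕ) (k : ℕ) : Submodule ℝ (Grass n) :=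
  Pf n k ⊓ LinearMap.ker (lapF n)

/-! Multiplication by x`² raises degree by 2, Δ_f lowers it by 2, and the Euler identity
∑ᵢ x`ᵢ ∂_{x`ᵢ} = k on 𝒫^f_k gives [Δ_f, x`²] = 4(k − n) there: an sl₂-triple. Consequently
an eigenvector of x`²Δ_f in degree m with positive eigenvalue is mapped by Δ_f to one of degree
m − 2 with a still larger eigenvalue (as long as m ≤ n + 2), and iterating until the degree
drops below 2 kills it; symmetrically Δ_f x`² has no positive eigenvalue in degrees m ≥ n − 2,
pushing up with x`² until the degree exceeds 2n. The second fact gives ℋ^f_k = 0 for k > n.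
The first makes Δ_f x`² injective, hence bijective, on 𝒫^f_{k−2} for k ≤ n, so
Δ_f : 𝒫^f_k → 𝒫^f_{k−2} is onto and rank–nullity gives C(2n, k) − C(2n, k − 2). -/

open ExteriorAlgebra

section

variable {n : ℕ}

theorem fpderiv_ι_mul (i : Fin (2*n)) (v : Fin (2*n) → ℝ) (b : Grass n) :
    fpderiv n i (ι ℝ v * b) = v i • b - ι ℝ v * fpderiv n i b :=
  CliffordAlgebra.contractLeft_ι_mul (Q := (0 : QuadraticForm ℝ (Fin (2*n) → ℝ)))
    (d := LinearMap.proj i) v b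

theorem fpderiv_fgen_mul (i j : Fin (2*n)) (b : Grass n) :
    fpderiv n i (fgen n j * b) = (if i = j then b else 0) - fgen n j * fpderiv n i b := by
  rw [fgen, fpderiv_ι_mul, Pi.single_apply, ite_smul, one_smul, zero_smul]

theorem fpderiv_algebraMap (i : Fin (2*n)) (r : ℝ) :
    fpderiv n i (algebraMap ℝ (Grass n) r) = 0 :=
  CliffordAlgebra.contractLeft_algebraMap (Q := (0 : QuadraticForm ℝ (Fin (2*n) → ℝ)))
    (d := LinearMap.proj i) r

theorem ι_eq_sum_smul_fgen (v : Fin (2*n) → ℝ) : ι ℝ v = ∑ i, v i • fgen n i := by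
  conv_lhs => rw [← Finset.univ_sum_single v]
  simp only [map_sum, fgen, ← map_smul, ← Pi.single_smul, smul_eq_mul, mul_one]

theorem fgen_mul_ι (i : Fin (2*n)) (v : Fin (2*n) → ℝ) :
    fgen n i * ι ℝ v = -(ι ℝ v * fgen n i) :=
  eq_neg_of_add_eq_zero_left (ι_add_mul_swap _ _)

theorem Pf_succ (m : ℕ) : Pf n (m + 1) = LinearMap.range (ι ℝ) * Pf n m :=
  pow_succ' _ _

theorem ι_mul_mem_Pf (v : Fin (2*n) → ℝ) {m : ℕ} {x : Grass n} (hx : x ∈ Pf n m) :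
    ι ℝ v * x ∈ Pf n (m + 1) :=
  Pf_succ m ▸ Submodule.mul_mem_mul ⟨v, rfl⟩ hx

theorem fpderiv_of_mem_Pf_zero (i : Fin (2*n)) {x : Grass n} (hx : x ∈ Pf n 0) :
    fpderiv n i x = 0 := by
  rw [Pf, pow_zero] at hx
  obtain ⟨r, rfl⟩ := Submodule.mem_one.1 hx
  exact fpderiv_algebraMap i r

theorem fpderiv_mem_Pf (i : Fin (2*n)) {m : ℕ} {x : Grass n} (hx : x ∈ Pf n (m + 1)) :
    fpderiv n i x ∈ Pf n m := by
  rw [Pf_succ] at hx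
  induction hx using Submodule.mul_induction_on' with
  | mem_mul_mem _ hv y hy =>
    obtain ⟨v, rfl⟩ := hv
    rw [fpderiv_ι_mul]
    refine sub_mem (Submodule.smul_mem _ _ hy) ?_
    cases m with
    | zero => rw [fpderiv_of_mem_Pf_zero i hy, mul_zero]; exact zero_mem _
    | succ m => exact ι_mul_mem_Pf v (fpderiv_mem_Pf i hy)
  | add _ _ _ _ hx hy => rw [map_add]; exact add_mem hx hy

theorem sum_fgen_mul_fpderiv_of_mem_Pf {m : ℕ} {x : Grass n} (hx : x ∈ Pf n m) :
    ∑ i, fgen n i * fpderiv n i x = (m : ℝ) • x := by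
  induction m generalizing x with
  | zero => simp [fpderiv_of_mem_Pf_zero _ hx]
  | succ m ih =>
    rw [Pf_succ] at hx
    induction hx using Submodule.mul_induction_on' with
    | mem_mul_mem _ hv y hy =>
      obtain ⟨v, rfl⟩ := hv
      have hterm : ∀ i, fgen n i * fpderiv n i (ι ℝ v * y)
          = v i • fgen n i * y + ι ℝ v * (fgen n i * fpderiv n i y) := fun i => by
        rw [fpderiv_ι_mul, mul_sub, mul_smul_comm, smul_mul_assoc, ← mul_assoc, fgen_mul_ι,
          neg_mul, mul_assoc, sub_neg_eq_add]
      rw [Finset.sum_congr rfl fun i _ => hterm i, Finset.sum_add_distrib, ← Finset.sum_mul,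
        ← ι_eq_sum_smul_fgen, ← Finset.mul_sum, ih hy, mul_smul_comm, Nat.cast_succ, add_smul,
        one_smul, add_comm]
    | add _ _ _ _ hx hy => simp only [map_add, mul_add, Finset.sum_add_distrib, hx, hy, smul_add]

def pairFst (j : Fin n) : Fin (2*n) := ⟨2*j, by omega⟩

def pairSnd (j : Fin n) : Fin (2*n) := ⟨2*j+1, by omega⟩

theorem sum_fin_two_mul {M : Type*} [AddCommMonoid M] (f : Fin (2*n) → M) :
    ∑ i, f i = ∑ j : Fin n, (f (pairFst j) + f (pairSnd j)) := by
  rw [← (finProdFinEquiv.trans (finCongr (Nat.mul_comm n 2))).sum_comp, Fintype.sum_prod_type]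
  refine Finset.sum_congr rfl fun j _ => ?_
  rw [Fin.sum_univ_two]
  congr 2 <;> ext <;> simp [pairFst, pairSnd, Nat.mul_comm, Nat.add_comm]

theorem lapF_apply (x : Grass n) :
    lapF n x = (4:ℝ) • ∑ j, fpderiv n (pairFst j) (fpderiv n (pairSnd j) x) := by
  simp [lapF, pairFst, pairSnd]

theorem rf2_mul (x : Grass n) :
    rf2 n * x = ∑ j, fgen n (pairFst j) * (fgen n (pairSnd j) * x) := by
  simp only [rf2, Finset.sum_mul, mul_assoc, pairFst, pairSnd]

theorem fpderiv_pair_fgen_pair_mul (j l : Fin n) (x : Grass n) :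
    fpderiv n (pairFst j) (fpderiv n (pairSnd j) (fgen n (pairFst l) * (fgen n (pairSnd l) * x)))
      = fgen n (pairFst l) * (fgen n (pairSnd l) *
          fpderiv n (pairFst j) (fpderiv n (pairSnd j) x))
        + if j = l then fgen n (pairFst j) * fpderiv n (pairFst j) x
            + fgen n (pairSnd j) * fpderiv n (pairSnd j) x - x else 0 := by
  have hfs : ∀ a b : Fin n, pairFst a ≠ pairSnd b := fun a b h => by
    simp only [pairFst, pairSnd, Fin.ext_iff] at h; omega
  have hsf : ∀ a b : Fin n, pairSnd a ≠ pairFst b := fun a b h => hfs b a h.symm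
  by_cases h : j = l
  · subst h
    simp only [fpderiv_fgen_mul, hsf, ↓reduceIte, mul_sub, zero_sub, neg_sub, map_sub, hfs, mul_neg,
      sub_neg_eq_add]
    abel
  · have h₁ : pairFst j ≠ pairFst l := fun h' => h (by simpa [pairFst, Fin.ext_iff] using h')
    have h₂ : pairSnd j ≠ pairSnd l := fun h' => h (by simpa [pairSnd, Fin.ext_iff] using h')
    simp [fpderiv_fgen_mul, hfs, hsf, h, h₁, h₂]

theorem lapF_rf2_mul {m : ℕ} {x : Grass n} (hx : x ∈ Pf n m) :
    lapF n (rf2 n * x) = rf2 n * lapF n x + (4 * ((m : ℝ) - n)) • x := by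
  have euler := sum_fgen_mul_fpderiv_of_mem_Pf hx
  rw [sum_fin_two_mul] at euler
  have hpair : ∀ j, fpderiv n (pairFst j) (fpderiv n (pairSnd j) (rf2 n * x))
      = rf2 n * fpderiv n (pairFst j) (fpderiv n (pairSnd j) x)
        + (fgen n (pairFst j) * fpderiv n (pairFst j) x
          + fgen n (pairSnd j) * fpderiv n (pairSnd j) x - x) := fun j => by
    rw [rf2_mul, map_sum, map_sum, Finset.sum_congr rfl fun l _ => fpderiv_pair_fgen_pair_mul j l x,
      Finset.sum_add_distrib, Finset.sum_ite_eq, if_pos (Finset.mem_univ _), ← rf2_mul]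
  rw [lapF_apply, lapF_apply, Finset.sum_congr rfl fun j _ => hpair j, Finset.sum_add_distrib,
    Finset.sum_sub_distrib, euler, ← Finset.mul_sum, Finset.sum_const, Finset.card_univ,
    Fintype.card_fin, ← Nat.cast_smul_eq_nsmul ℝ, ← sub_smul, smul_add, mul_smul_comm, smul_smul]

theorem lapF_mem_Pf {m : ℕ} {x : Grass n} (hx : x ∈ Pf n (m + 2)) : lapF n x ∈ Pf n m := by
  rw [lapF_apply]
  exact Submodule.smul_mem _ _ <| Submodule.sum_mem _ fun j _ =>
    fpderiv_mem_Pf _ (fpderiv_mem_Pf _ hx)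

theorem lapF_of_mem_Pf_of_lt_two {m : ℕ} (hm : m < 2) {x : Grass n} (hx : x ∈ Pf n m) :
    lapF n x = 0 := by
  rw [lapF_apply]
  refine (smul_eq_zero_of_right _ <| Finset.sum_eq_zero fun j _ => ?_)
  interval_cases m
  · rw [fpderiv_of_mem_Pf_zero _ hx, map_zero]
  · exact fpderiv_of_mem_Pf_zero _ (fpderiv_mem_Pf _ hx)

theorem rf2_mul_mem_Pf {m : ℕ} {x : Grass n} (hx : x ∈ Pf n m) : rf2 n * x ∈ Pf n (m + 2) := by
  rw [rf2_mul]
  exact Submodule.sum_mem _ fun j _ => ι_mul_mem_Pf _ (ι_mul_mem_Pf _ hx)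

instance (k : ℕ) : FiniteDimensional ℝ (Pf n k) :=
  exteriorPower.instFinite

theorem finrank_Pf (k : ℕ) : Module.finrank ℝ (Pf n k) = (2*n).choose k := by
  rw [Pf, exteriorPower.finrank_eq, Module.finrank_fin_fun]

theorem Pf_eq_bot {m : ℕ} (hm : 2*n < m) : Pf n m = ⊥ :=
  Submodule.finrank_eq_zero.1 <| (finrank_Pf m).trans (Nat.choose_eq_zero_of_lt hm)

theorem eq_zero_of_rf2_mul_lapF_eq_smul {m : ℕ} (hm : m ≤ n + 2) {x : Grass n}
    (hx : x ∈ Pf n m) {c : ℝ} (hc : 0 < c) (h : rf2 n * lapF n x = c • x) : x = 0 := by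
  induction m using Nat.strong_induction_on generalizing x c with
  | _ m ih =>
    rcases Nat.lt_or_ge m 2 with hm2 | hm2
    · rw [lapF_of_mem_Pf_of_lt_two hm2 hx, mul_zero] at h
      exact (smul_eq_zero_iff_right hc.ne').1 h.symm
    obtain ⟨m, rfl⟩ := Nat.exists_eq_add_of_le' hm2
    have hz := lapF_mem_Pf hx
    have hz' : rf2 n * lapF n (lapF n x) = (c + 4 * ((n : ℝ) - m)) • lapF n x := by
      have := lapF_rf2_mul hz
      rw [h, map_smul] at this
      rw [add_smul, ← neg_sub (m : ℝ), mul_neg, neg_smul, this]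
      abel
    have hmn : (m : ℝ) ≤ n := by exact_mod_cast (show m ≤ n by omega)
    have hz0 := ih m (by omega) (by omega) hz (by linarith) hz'
    rw [hz0, mul_zero] at h
    exact (smul_eq_zero_iff_right hc.ne').1 h.symm

theorem eq_zero_of_lapF_rf2_mul_eq_smul {m : ℕ} (hm : n ≤ m + 2) {x : Grass n}
    (hx : x ∈ Pf n m) {c : ℝ} (hc : 0 < c) (h : lapF n (rf2 n * x) = c • x) : x = 0 := by
  induction m using Nat.strong_decreasing_induction generalizing x c with
  | base => exact ⟨2*n, fun m hm _ x hx _ _ _ => by simpa [Pf_eq_bot hm] using hx⟩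
  | step m ih =>
    have hw := rf2_mul_mem_Pf hx
    have hw' : lapF n (rf2 n * (rf2 n * x)) = (c + 4 * ((m : ℝ) + 2 - n)) • (rf2 n * x) := by
      rw [lapF_rf2_mul hw, h, mul_smul_comm, add_smul, Nat.cast_add, Nat.cast_two]
    have hmn : (n : ℝ) ≤ m + 2 := by exact_mod_cast hm
    have hw0 := ih (m + 2) (by omega) (by omega) hw (by linarith) hw'
    rw [hw0, map_zero] at h
    exact (smul_eq_zero_iff_right hc.ne').1 h.symm

theorem Hf_eq_bot {k : ℕ} (hk : n < k) : Hf n k = ⊥ := by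
  refine eq_bot_iff.2 fun x ⟨hx, hΔ⟩ => ?_
  refine eq_zero_of_lapF_rf2_mul_eq_smul (by omega) hx (c := 4 * ((k : ℝ) - n)) ?_ ?_
  · have : (n : ℝ) < k := by exact_mod_cast hk
    linarith
  · rw [lapF_rf2_mul hx, LinearMap.mem_ker.1 hΔ, mul_zero, zero_add]

theorem Hf_eq_Pf_of_lt_two {k : ℕ} (hk : k < 2) : Hf n k = Pf n k :=
  inf_eq_left.2 fun _ hx => lapF_of_mem_Pf_of_lt_two hk hx

theorem exists_lapF_eq {m : ℕ} (hm : m < n) {y : Grass n} (hy : y ∈ Pf n m) :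
    ∃ x ∈ Pf n (m + 2), lapF n x = y := by
  let T : Pf n m →ₗ[ℝ] Pf n m :=
    (lapF n ∘ₗ LinearMap.mulLeft ℝ (rf2 n)).restrict fun x hx => lapF_mem_Pf (rf2_mul_mem_Pf hx)
  have hT : Function.Injective T := by
    refine (injective_iff_map_eq_zero T).2 fun x hx => Subtype.ext ?_
    have hx : lapF n (rf2 n * x) = 0 := congrArg Subtype.val hx
    refine eq_zero_of_rf2_mul_lapF_eq_smul (by omega) x.2 (c := 4 * ((n : ℝ) - m)) ?_ ?_
    · have : (m : ℝ) < n := by exact_mod_cast hm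
      linarith
    · rw [← sub_eq_zero, ← neg_sub (m : ℝ), mul_neg, neg_smul, sub_neg_eq_add, ← hx,
        lapF_rf2_mul x.2]
  obtain ⟨x, hx⟩ := LinearMap.injective_iff_surjective.1 hT ⟨y, hy⟩
  exact ⟨rf2 n * x, rf2_mul_mem_Pf x.2, congrArg Subtype.val hx⟩

theorem finrank_Hf_add_two {m : ℕ} (hm : m < n) :
    Module.finrank ℝ (Hf n (m + 2)) = (2*n).choose (m + 2) - (2*n).choose m := by
  let ψ : Pf n (m + 2) →ₗ[ℝ] Pf n m := (lapF n).restrict fun _ => lapF_mem_Pf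
  have hψ : Function.Surjective ψ := fun y => by
    obtain ⟨x, hx, hxy⟩ := exists_lapF_eq hm y.2
    exact ⟨⟨x, hx⟩, Subtype.ext hxy⟩
  have hker : Hf n (m + 2) = (LinearMap.ker ψ).map (Pf n (m + 2)).subtype := by
    rw [LinearMap.ker_restrict, Submodule.map_comap_subtype, Hf]
  have := LinearMap.finrank_range_add_finrank_ker ψ
  rw [LinearMap.range_eq_top.2 hψ, finrank_top, finrank_Pf, finrank_Pf] at this
  rw [hker, Submodule.finrank_map_subtype_eq]
  omega

end

theorem dim_Hf_general (n : ℕ) (k : ℕ) :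
    (k > n → Hf n k = ⊥) ∧
    (k ≤ n → Module.finrank ℝ (Hf n k) =
      Nat.choose (2*n) k - (if 2 ≤ k then Nat.choose (2*n) (k-2) else 0)) := by
  refine ⟨Hf_eq_bot, fun hk => ?_⟩
  split_ifs with h2
  · obtain ⟨m, rfl⟩ := Nat.exists_eq_add_of_le' h2
    exact finrank_Hf_add_two (by omega)
  · rw [Hf_eq_Pf_of_lt_two (by omega), finrank_Pf, Nat.sub_zero]

/-- in the purely fermionic case, ℋ^f_k = 0 for k > n, and
dim ℋ^f_k = C(2n, k) − C(2n, k−2) for 0 ≤ k ≤ n (with C(2n, j) = 0 for j < 0). -/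
theorem dim_Hf (n : ℕ) (hn : 1 ≤ n) (k : ℕ) :
    (k > n → Hf n k = ⊥) ∧
    (k ≤ n → Module.finrank ℝ (Hf n k) =
      Nat.choose (2*n) k - (if 2 ≤ k then Nat.choose (2*n) (k-2) else 0)) :=
  dim_Hf_general n k

end
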